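/- Let Q be the quiver with vertex set {0,1,2,∞} and arrows a₀ : 0→1, a₁ : 1→2, a₂ : 2→0, p : ∞→0. In the necklace Lie algebra HH₀(𝕂Q̄), set Γ := a₀*a₁*a₂* (a cyclic path at the vertex 0, products of paths being composed like functions: in a product xy, the path y is traversed first). Then {p* Γ^k p, p* Γ^l p} = 0 for all k, l ∈ ℕ; in particular the classes p* Γ^k p, k ∈ ℕ, pairwise Poisson-commute in HH₀(𝕂Q̄). -/

import Mathlib

/-! STATEMENT 8: for the quiver with vertices {0,1,2,∞} (∞ = 3) and arrows
a₀:0→1, a₁:1→2, a₂:2→0, p:∞→0, setting Γ = a₀*a₁*a₂* one has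
{p*Γ^k p, p*Γ^l p} = 0 in the necklace Lie algebra HH₀(𝕂Q̄) for all k,l ∈ ℕ. -/

open TensorProduct

noncomputable section

variable (K : Type) [Field K]

/-- The cyclic permutation `x ⊗ y ⊗ z ↦ y ⊗ z ⊗ x` on the triple tensor product. -/
def cyc132 (A : Type) [Ring A] [Algebra K A] :
    A ⊗[K] (A ⊗[K] A) →ₗ[K] A ⊗[K] (A ⊗[K] A) :=
  (TensorProduct.assoc K A A A).toLinearMap ∘ₗ
    (TensorProduct.comm K A (A ⊗[K] A)).toLinearMap

/-- `⦃b, u ⊗ v⦄_L = ⦃b, u⦄ ⊗ v`. -/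
def brExtL (A : Type) [Ring A] [Algebra K A]
    (f : A →ₗ[K] A ⊗[K] A) : A ⊗[K] A →ₗ[K] A ⊗[K] (A ⊗[K] A) :=
  (TensorProduct.assoc K A A A).toLinearMap ∘ₗ TensorProduct.map f LinearMap.id

/-- Outer bimodule structure: left multiplication `b · (u ⊗ v) = bu ⊗ v`. -/
def outL (A : Type) [Ring A] [Algebra K A] (b : A) :
    A ⊗[K] A →ₗ[K] A ⊗[K] A :=
  TensorProduct.map (LinearMap.mulLeft K b) LinearMap.id

/-- Outer bimodule structure: right multiplication `(u ⊗ v) · c = u ⊗ vc`. -/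
def outR (A : Type) [Ring A] [Algebra K A] (c : A) :
    A ⊗[K] A →ₗ[K] A ⊗[K] A :=
  TensorProduct.map LinearMap.id (LinearMap.mulRight K c)

/-- A double Poisson bracket (Van den Bergh) on an `R`-algebra `A`,
where `R = ⊕_{i ∈ I} 𝕂 e_i` is encoded by the family of idempotents `e : I → A`;
`R`-bilinearity is encoded by the vanishing `⦃e_i, -⦄ = 0`. -/
structure DoubleBracket (I : Type) (A : Type) [Ring A] [Algebra K A] (e : I → A) where
  br : A →ₗ[K] A →ₗ[K] A ⊗[K] A
  skew : ∀ a b : A, br a b = - (TensorProduct.comm K A A) (br b a)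
  leibniz : ∀ a b c : A,
    br a (b * c) = outR K A c (br a b) + outL K A b (br a c)
  jacobi : ∀ a b c : A,
    brExtL K A (br a) (br b c)
      + cyc132 K A (brExtL K A (br c) (br a b))
      + cyc132 K A (cyc132 K A (brExtL K A (br b) (br c a))) = 0
  e_vanish : ∀ (i : I) (a : A), br (e i) a = 0

/-- The span of commutators `[A,A]`. -/
def commSpan (A : Type) [Ring A] [Algebra K A] : Submodule K A :=
  Submodule.span K {x : A | ∃ a b : A, x = a * b - b * a}

/-- Zeroth Hochschild homology `HH₀(A) = A/[A,A]`. -/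
abbrev HH0 (A : Type) [Ring A] [Algebra K A] := A ⧸ commSpan K A

section PathAlgebra

/- A finite quiver `Q`: vertex set `V`, arrow set `E`, source `Qs`, target `Qt`.
The doubled quiver `Q̄` has arrows `E ⊕ E`: `Sum.inl a = a` and `Sum.inr a = a*`. -/
variable (V E : Type) [Fintype V] [DecidableEq V] [Fintype E] [DecidableEq E]
variable (Qs Qt : E → V)

/-- Source of a doubled arrow. -/
def sbar : E ⊕ E → V := Sum.elim Qs Qt

/-- Target of a doubled arrow. -/
def tbar : E ⊕ E → V := Sum.elim Qt Qs

/-- The involution `a ↦ a*`, `a* ↦ a` on doubled arrows. -/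
def dstar : E ⊕ E → E ⊕ E := Sum.elim Sum.inr Sum.inl

/-- The defining relations of the path algebra of the doubled quiver `Q̄`
(products of paths compose like functions: in `x * y` the path `y` comes first). -/
inductive PathRel :
    FreeAlgebra K (V ⊕ (E ⊕ E)) → FreeAlgebra K (V ⊕ (E ⊕ E)) → Prop
  | vert_mul (i j : V) :
      PathRel (FreeAlgebra.ι K (Sum.inl i) * FreeAlgebra.ι K (Sum.inl j))
        (if i = j then FreeAlgebra.ι K (Sum.inl i) else 0)
  | vert_sum :
      PathRel (Finset.univ.sum fun i : V => FreeAlgebra.ι K (Sum.inl i)) 1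
  | arr_left (x : E ⊕ E) :
      PathRel (FreeAlgebra.ι K (Sum.inl (tbar V E Qs Qt x)) * FreeAlgebra.ι K (Sum.inr x))
        (FreeAlgebra.ι K (Sum.inr x))
  | arr_right (x : E ⊕ E) :
      PathRel (FreeAlgebra.ι K (Sum.inr x) * FreeAlgebra.ι K (Sum.inl (sbar V E Qs Qt x)))
        (FreeAlgebra.ι K (Sum.inr x))

/-- The path algebra `𝕂Q̄` of the doubled quiver, presented by generators and relations. -/
abbrev PathAlg := RingQuot (PathRel K V E Qs Qt)

/-- The trivial path (idempotent) `e_i` at a vertex `i`. -/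
def vtx (i : V) : PathAlg K V E Qs Qt :=
  RingQuot.mkAlgHom K (PathRel K V E Qs Qt) (FreeAlgebra.ι K (Sum.inl i))

/-- The element of `𝕂Q̄` given by a doubled arrow. -/
def arr (x : E ⊕ E) : PathAlg K V E Qs Qt :=
  RingQuot.mkAlgHom K (PathRel K V E Qs Qt) (FreeAlgebra.ι K (Sum.inr x))

/-- The standard noncommutative moment map `w = Σ_{a ∈ Q} (a a* − a* a)` of `𝕂Q̄`. -/
def ncw : PathAlg K V E Qs Qt :=
  Finset.univ.sum fun a : E =>
    arr K V E Qs Qt (Sum.inl a) * arr K V E Qs Qt (Sum.inr a)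
      - arr K V E Qs Qt (Sum.inr a) * arr K V E Qs Qt (Sum.inl a)

/-- The condition that a double bracket on `𝕂Q̄` is the standard one:
`⦃a,a*⦄ = e_{s(a)} ⊗ e_{t(a)}`, `⦃a*,a⦄ = −e_{t(a)} ⊗ e_{s(a)}`, and `⦃f,g⦄ = 0`
for arrows `f ≠ g*`. -/
def IsQuiverBracket (D : DoubleBracket K V (PathAlg K V E Qs Qt) (vtx K V E Qs Qt)) :
    Prop :=
  (∀ a : E,
    D.br (arr K V E Qs Qt (Sum.inl a)) (arr K V E Qs Qt (Sum.inr a))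
      = vtx K V E Qs Qt (Qs a) ⊗ₜ[K] vtx K V E Qs Qt (Qt a))
  ∧ (∀ a : E,
    D.br (arr K V E Qs Qt (Sum.inr a)) (arr K V E Qs Qt (Sum.inl a))
      = - (vtx K V E Qs Qt (Qt a) ⊗ₜ[K] vtx K V E Qs Qt (Qs a)))
  ∧ (∀ f g : E ⊕ E, f ≠ dstar E g →
      D.br (arr K V E Qs Qt f) (arr K V E Qs Qt g) = 0)

end PathAlgebra

section Statement8

/-- Sources of the arrows `a₀ : 0 → 1`, `a₁ : 1 → 2`, `a₂ : 2 → 0`, `p : ∞ → 0`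
(with `∞ = 3`). -/
def QsA3 : Fin 4 → Fin 4 := ![0, 1, 2, 3]

/-- Targets of the arrows `a₀ : 0 → 1`, `a₁ : 1 → 2`, `a₂ : 2 → 0`, `p : ∞ → 0`. -/
def QtA3 : Fin 4 → Fin 4 := ![1, 2, 0, 0]

/-- The cyclic path `Γ = a₀* a₁* a₂*` at the vertex `0` (in a product `x*y`,
the path `y` is traversed first). -/
def gammaA3 : PathAlg K (Fin 4) (Fin 4) QsA3 QtA3 :=
  arr K (Fin 4) (Fin 4) QsA3 QtA3 (Sum.inr 0)
    * arr K (Fin 4) (Fin 4) QsA3 QtA3 (Sum.inr 1)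
    * arr K (Fin 4) (Fin 4) QsA3 QtA3 (Sum.inr 2)

/-- The cyclic path `p* Γ^k p` at the vertex `∞`. -/
def pGkp (k : ℕ) : PathAlg K (Fin 4) (Fin 4) QsA3 QtA3 :=
  arr K (Fin 4) (Fin 4) QsA3 QtA3 (Sum.inr 3) * (gammaA3 K) ^ k
    * arr K (Fin 4) (Fin 4) QsA3 QtA3 (Sum.inl 3)

section AuxBr

variable {K' : Type} [Field K'] {I A : Type} [Ring A] [Algebra K' A] {e : I → A}
variable (D : DoubleBracket K' I A e)

lemma aux_outL_one : outL K' A (1 : A) = LinearMap.id := by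
  apply TensorProduct.ext'
  intro u v
  simp [outL]

lemma aux_outR_one : outR K' A (1 : A) = LinearMap.id := by
  apply TensorProduct.ext'
  intro u v
  simp [outR]

lemma aux_br_one (a : A) : D.br a 1 = 0 := by
  have h := D.leibniz a 1 1
  rw [mul_one, aux_outL_one, aux_outR_one] at h
  simp only [LinearMap.id_apply] at h
  exact right_eq_add.mp h

lemma aux_br_mul (a b c : A) (hb : D.br a b = 0) (hc : D.br a c = 0) :
    D.br a (b * c) = 0 := by
  rw [D.leibniz, hb, hc, map_zero, map_zero, add_zero]

lemma aux_br_pow (a b : A) (hb : D.br a b = 0) (n : ℕ) : D.br a (b ^ n) = 0 := by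
  induction n with
  | zero => simpa using aux_br_one D a
  | succ n ih => rw [pow_succ]; exact aux_br_mul D _ _ _ ih hb

lemma aux_br_swap (a b : A) (h : D.br a b = 0) : D.br b a = 0 := by
  rw [D.skew, h]; simp

end AuxBr

section AuxPath

variable (V E : Type) [Fintype V] [DecidableEq V] [Fintype E] [DecidableEq E]
variable (Qs Qt : E → V)

lemma aux_arr_left (x : E ⊕ E) :
    vtx K V E Qs Qt (tbar V E Qs Qt x) * arr K V E Qs Qt x = arr K V E Qs Qt x := by
  rw [vtx, arr, ← map_mul]
  exact RingQuot.mkAlgHom_rel K (PathRel.arr_left x)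

lemma aux_arr_right (x : E ⊕ E) :
    arr K V E Qs Qt x * vtx K V E Qs Qt (sbar V E Qs Qt x) = arr K V E Qs Qt x := by
  rw [vtx, arr, ← map_mul]
  exact RingQuot.mkAlgHom_rel K (PathRel.arr_right x)

end AuxPath

lemma gamma_eq : gammaA3 K =
    arr K (Fin 4) (Fin 4) QsA3 QtA3 (Sum.inr 0)
      * arr K (Fin 4) (Fin 4) QsA3 QtA3 (Sum.inr 1)
      * arr K (Fin 4) (Fin 4) QsA3 QtA3 (Sum.inr 2) := rfl

theorem statement8
    (D : DoubleBracket K (Fin 4) (PathAlg K (Fin 4) (Fin 4) QsA3 QtA3)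
          (vtx K (Fin 4) (Fin 4) QsA3 QtA3))
    (hD : IsQuiverBracket K (Fin 4) (Fin 4) QsA3 QtA3 D)
    (k l : ℕ) :
    -- `{p* Γ^k p, p* Γ^l p} = 0` in `HH₀(𝕂Q̄)`:
    (commSpan K (PathAlg K (Fin 4) (Fin 4) QsA3 QtA3)).mkQ
        (LinearMap.mul' K _ (D.br (pGkp K k) (pGkp K l))) = 0 := by
  obtain ⟨hbr1, hbr2, zg⟩ := hD
  set P : PathAlg K (Fin 4) (Fin 4) QsA3 QtA3 :=
    arr K (Fin 4) (Fin 4) QsA3 QtA3 (Sum.inr 3) with hPdef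
  set q : PathAlg K (Fin 4) (Fin 4) QsA3 QtA3 :=
    arr K (Fin 4) (Fin 4) QsA3 QtA3 (Sum.inl 3) with hqdef
  set G : PathAlg K (Fin 4) (Fin 4) QsA3 QtA3 := gammaA3 K with hGdef
  set E0 : PathAlg K (Fin 4) (Fin 4) QsA3 QtA3 :=
    vtx K (Fin 4) (Fin 4) QsA3 QtA3 0 with hE0def
  set E3 : PathAlg K (Fin 4) (Fin 4) QsA3 QtA3 :=
    vtx K (Fin 4) (Fin 4) QsA3 QtA3 3 with hE3def
  -- zero brackets with Γ on the right
  have hgG : ∀ f : (Fin 4) ⊕ (Fin 4), f ≠ Sum.inl 0 → f ≠ Sum.inl 1 → f ≠ Sum.inl 2 →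
      D.br (arr K (Fin 4) (Fin 4) QsA3 QtA3 f) G = 0 := by
    intro f h0 h1 h2
    rw [hGdef, gamma_eq]
    exact aux_br_mul D _ _ _ (aux_br_mul D _ _ _ (zg _ _ h0) (zg _ _ h1)) (zg _ _ h2)
  have hPP : D.br P P = 0 := zg _ _ (by decide)
  have hqq : D.br q q = 0 := zg _ _ (by decide)
  have hPG : D.br P G = 0 := hgG _ (by decide) (by decide) (by decide)
  have hqG : D.br q G = 0 := hgG _ (by decide) (by decide) (by decide)
  have hPq : D.br P q = -(E0 ⊗ₜ[K] E3) := by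
    have h := hbr2 3
    simp only [show QtA3 3 = 0 from by decide, show QsA3 3 = 3 from by decide] at h
    exact h
  have hqP : D.br q P = E3 ⊗ₜ[K] E0 := by
    have h := hbr1 3
    simp only [show QtA3 3 = 0 from by decide, show QsA3 3 = 3 from by decide] at h
    exact h
  -- zero bracket of generators (other than p, p*) with x = p* Γ^m p
  have hgx : ∀ f : (Fin 4) ⊕ (Fin 4), f ≠ Sum.inl 0 → f ≠ Sum.inl 1 → f ≠ Sum.inl 2 →
      f ≠ Sum.inl 3 → f ≠ Sum.inr 3 → ∀ m : ℕ,
      D.br (arr K (Fin 4) (Fin 4) QsA3 QtA3 f) (pGkp K m) = 0 := by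
    intro f h0 h1 h2 h3 h4 m
    rw [show pGkp K m = P * G ^ m * q from rfl]
    exact aux_br_mul D _ _ _
      (aux_br_mul D _ _ _ (zg _ _ h3) (aux_br_pow D _ _ (hgG f h0 h1 h2) m)) (zg _ _ h4)
  have hxg : ∀ i : Fin 4, i ≠ 3 →
      D.br (pGkp K k) (arr K (Fin 4) (Fin 4) QsA3 QtA3 (Sum.inr i)) = 0 := by
    intro i hi
    exact aux_br_swap D _ _
      (hgx (Sum.inr i) (by simp) (by simp) (by simp) (by simp) (by simpa using hi) k)
  have hxG : D.br (pGkp K k) G = 0 := by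
    rw [hGdef, gamma_eq]
    exact aux_br_mul D _ _ _
      (aux_br_mul D _ _ _ (hxg 0 (by decide)) (hxg 1 (by decide))) (hxg 2 (by decide))
  -- absorption of idempotents
  have habs1 : E3 * P = P := by
    have h := aux_arr_left K (Fin 4) (Fin 4) QsA3 QtA3 (Sum.inr 3)
    simpa only [show tbar (Fin 4) (Fin 4) QsA3 QtA3 (Sum.inr 3) = 3 from by decide] using h
  have habs2 : q * E3 = q := by
    have h := aux_arr_right K (Fin 4) (Fin 4) QsA3 QtA3 (Sum.inl 3)
    simpa only [show sbar (Fin 4) (Fin 4) QsA3 QtA3 (Sum.inl 3) = 3 from by decide] using h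
  have habs3 : P * E0 = P := by
    have h := aux_arr_right K (Fin 4) (Fin 4) QsA3 QtA3 (Sum.inr 3)
    simpa only [show sbar (Fin 4) (Fin 4) QsA3 QtA3 (Sum.inr 3) = 0 from by decide] using h
  have habs4 : E0 * q = q := by
    have h := aux_arr_left K (Fin 4) (Fin 4) QsA3 QtA3 (Sum.inl 3)
    simpa only [show tbar (Fin 4) (Fin 4) QsA3 QtA3 (Sum.inl 3) = 0 from by decide] using h
  have habs5 : G * E0 = G := by
    have h := aux_arr_right K (Fin 4) (Fin 4) QsA3 QtA3 (Sum.inr 2)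
    simp only [show sbar (Fin 4) (Fin 4) QsA3 QtA3 (Sum.inr 2) = 0 from by decide] at h
    rw [hGdef, gamma_eq]
    conv_lhs => rw [mul_assoc]
    rw [h]
  have habs6 : E0 * G = G := by
    have h := aux_arr_left K (Fin 4) (Fin 4) QsA3 QtA3 (Sum.inr 0)
    simp only [show tbar (Fin 4) (Fin 4) QsA3 QtA3 (Sum.inr 0) = 0 from by decide] at h
    rw [hGdef, gamma_eq]
    conv_lhs => rw [← mul_assoc, ← mul_assoc]
    rw [h]
  have habsGk1 : ∀ m : ℕ, (P * G ^ m) * E0 = P * G ^ m := by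
    intro m
    cases m with
    | zero => simpa using habs3
    | succ n => rw [pow_succ, ← mul_assoc, mul_assoc (P * G ^ n), habs5]
  have habsGk2 : ∀ m : ℕ, E0 * (G ^ m * q) = G ^ m * q := by
    intro m
    cases m with
    | zero => simpa using habs4
    | succ n => rw [pow_succ', mul_assoc G (G ^ n) q, ← mul_assoc E0 G (G ^ n * q), habs6]
  -- the key bracket computations
  have hPx : D.br P (pGkp K k) = -((P * G ^ k) ⊗ₜ[K] E3) := by
    rw [show pGkp K k = P * G ^ k * q from rfl, D.leibniz,
      aux_br_mul D _ _ _ hPP (aux_br_pow D _ _ hPG k), map_zero, zero_add, hPq, map_neg]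
    simp only [outL, TensorProduct.map_tmul, LinearMap.mulLeft_apply, LinearMap.id_coe,
      id_eq]
    rw [habsGk1 k]
  have hxP : D.br (pGkp K k) P = E3 ⊗ₜ[K] (P * G ^ k) := by
    rw [D.skew, hPx]
    simp
  have hqx : D.br q (pGkp K k) = E3 ⊗ₜ[K] (G ^ k * q) := by
    rw [show pGkp K k = P * G ^ k * q from rfl, D.leibniz, hqq, map_zero, add_zero,
      D.leibniz, aux_br_pow D _ _ hqG k, map_zero, add_zero, hqP]
    simp only [outR, TensorProduct.map_tmul, LinearMap.id_coe, id_eq,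
      LinearMap.mulRight_apply, mul_assoc]
    rw [habsGk2 k]
  have hxq : D.br (pGkp K k) q = -((G ^ k * q) ⊗ₜ[K] E3) := by
    rw [D.skew, hqx]
    simp
  have hz : LinearMap.mul' K (PathAlg K (Fin 4) (Fin 4) QsA3 QtA3)
      (D.br (pGkp K k) (pGkp K l)) = 0 := by
    rw [show pGkp K l = P * G ^ l * q from rfl, D.leibniz, D.leibniz, hxP, hxq,
      aux_br_pow D _ _ hxG l, map_zero, add_zero]
    have key : G ^ k * (G ^ l * q) = G ^ l * (G ^ k * q) := by
      rw [← mul_assoc, ← mul_assoc, pow_mul_comm]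
    have e3mul : ∀ w, E3 * (P * w) = P * w := fun w => by rw [← mul_assoc, habs1]
    simp only [outR, outL, TensorProduct.map_tmul, LinearMap.id_coe, id_eq,
      LinearMap.mulRight_apply, LinearMap.mulLeft_apply, map_add, map_neg,
      LinearMap.mul'_apply, mul_assoc, habs2, e3mul]
    rw [key]
    exact add_neg_cancel _
  rw [hz, map_zero]

end Statement8

end
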